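/- Suppose ℙ satisfies the 'usual conditions', 𝔼(Σ_x ω_{0,x}|x|²) < ∞, and 𝔼(1/ω_{0,ê_i}) < ∞ for i = 1,…,d. Then the limiting Brownian motion in the quenched invariance principle for M_n := Ψ(ω,X_n) is non-degenerate; explicitly, there is c > 0 such that E_ℚ E_ω^0[(λ·Ψ(ω,X_1))²] ≥ c|λ|² for every λ ∈ ℝ^d. -/

import Mathlib

/-!
With `Z = 𝔼 π_ω(0)`, the `ℚ`-expectation equals `Z⁻¹ 𝔼 ∑_x ω_{0x} (λ·Ψ(ω,x))²`, which dominates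
`Z⁻¹ ∑_i 𝔼[ω_{0,ê_i} (λ·Ψ(ω,ê_i))²]`. The corrector is an `L²`-limit of gradients of bounded local
functions, whose means vanish by shift invariance; hence `𝔼[λ·Ψ(ω,ê_i)] = λ_i`, and Cauchy–Schwarz
with weight `ω_{0,ê_i}` gives `λ_i² ≤ 𝔼[ω_{0,ê_i} (λ·Ψ(ω,ê_i))²] · 𝔼[1/ω_{0,ê_i}]`. Summing over `i`
yields the claim with `c⁻¹ = Z (1 + ∑_i 𝔼[1/ω_{0,ê_i}])`.
-/

open MeasureTheory Filter Topology Set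
open scoped ENNReal NNReal

noncomputable section

namespace RCM

/-- Vertices of the lattice `ℤ^d`. -/
abbrev V (d : ℕ) := Fin d → ℤ

/-- Euclidean norm of a vector in `ℝ^d`. -/
def rnorm {d : ℕ} (y : Fin d → ℝ) : ℝ := Real.sqrt (∑ i, (y i) ^ 2)

/-- The canonical embedding `ℤ^d → ℝ^d`. -/
def toR {d : ℕ} (x : V d) : Fin d → ℝ := fun i => (x i : ℝ)

/-- Euclidean norm of a lattice vector. -/
def vnorm {d : ℕ} (x : V d) : ℝ := rnorm (toR x)

/-- The `i`-th coordinate unit vector of `ℤ^d`. -/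
def unit {d : ℕ} (i : Fin d) : V d := fun j => if j = i then 1 else 0

/-- Nearest-neighbour adjacency on `ℤ^d`. -/
def adj {d : ℕ} (x y : V d) : Prop := (∑ i, |x i - y i|) = 1

/-- A configuration of conductances on `ℤ^d`: nonnegative, symmetric, with
`π_ω(x) = ∑_y ω_{xy} ∈ (0,∞)` for every `x`. -/
structure Cfg (d : ℕ) where
  w : V d → V d → ℝ
  nonneg : ∀ x y, 0 ≤ w x y
  symm : ∀ x y, w x y = w y x
  summ : ∀ x, Summable fun y => w x y
  pos : ∀ x, 0 < ∑' y, w x y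

variable {d : ℕ}

/-- The product σ-algebra on the space of conductance configurations. -/
instance : MeasurableSpace (Cfg d) := MeasurableSpace.comap Cfg.w inferInstance

/-- `π_ω(x) := ∑_y ω_{xy}`. -/
def piC (ω : Cfg d) (x : V d) : ℝ := ∑' y, ω.w x y

/-- The one-step transition probabilities `P_ω(x,y) = ω_{xy}/π_ω(x)` of the random walk
among the conductances `ω`. -/
def step (ω : Cfg d) (x y : V d) : ℝ := ω.w x y / piC ω x

/-- `n`-step transition probabilities `P_ω^n(x,y)`. -/
def Pn (ω : Cfg d) : ℕ → V d → V d → ℝ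
  | 0, x, y => if x = y then 1 else 0
  | n + 1, x, y => ∑' z, Pn ω n x z * step ω z y

/-- The shift `τ_z` acting on configurations: `(τ_zω)_{xy} = ω_{x+z,y+z}`. -/
def shiftC (z : V d) (ω : Cfg d) : Cfg d where
  w x y := ω.w (x + z) (y + z)
  nonneg x y := ω.nonneg _ _
  symm x y := ω.symm _ _
  summ x := by
    have h := (Equiv.addRight z).summable_iff (f := fun y => ω.w (x + z) y)
    simpa [Function.comp_def] using h.mpr (ω.summ (x + z))
  pos x := by
    have h := (Equiv.addRight z).tsum_eq (f := fun y => ω.w (x + z) y)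
    simp only [Equiv.coe_addRight] at h
    calc (0:ℝ) < ∑' y, ω.w (x + z) y := ω.pos (x + z)
    _ = ∑' y, ω.w (x + z) (y + z) := h.symm

/-- The law of the discrete-time random walk among the conductances `ω` started at `x₀`,
characterized through its cylinder probabilities. -/
def IsPathLaw (ω : Cfg d) (x₀ : V d) (μ : Measure (ℕ → V d)) : Prop :=
  IsProbabilityMeasure μ ∧
  ∀ (n : ℕ) (p : ℕ → V d),
    μ {X | ∀ i ≤ n, X i = p i} =
      ENNReal.ofReal ((if p 0 = x₀ then (1:ℝ) else 0) *
        ∏ i ∈ Finset.range n, step ω (p i) (p (i + 1)))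

/-- The measure `ℚ(dω) = Z⁻¹ π_ω(0) ℙ(dω)`. -/
def Qmeas (P : Measure (Cfg d)) : Measure (Cfg d) :=
  (ENNReal.ofReal (∫ ω, piC ω 0 ∂P))⁻¹ •
    P.withDensity fun ω => ENNReal.ofReal (piC ω 0)

/-- Bounded measurable real functions on the space of environments. -/
def BddMeas (f : Cfg d → ℝ) : Prop := Measurable f ∧ ∃ C, ∀ ω, |f ω| ≤ C

/-- The "usual conditions" on an environment law: a translation-invariant probability
measure with `𝔼 π_ω(0) < ∞`, irreducible, and ergodic with respect to translations. -/
structure UsualConds (P : Measure (Cfg d)) : Prop where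
  prob : IsProbabilityMeasure P
  inv : ∀ z : V d, MeasurePreserving (shiftC z) P P
  integ : Integrable (fun ω => piC ω 0) P
  irred : ∀ x : V d, P {ω | ∃ n, 0 < Pn ω n 0 x} = 1
  erg : ∀ A : Set (Cfg d), MeasurableSet A → (∀ z, shiftC z ⁻¹' A = A) → P A = 0 ∨ P A = 1

/-- The transition kernel `𝒫` of the environment seen from the particle, applied to a
function `g`: `(𝒫 g)(ω) = ∑_x P_ω(0,x) g(τ_x ω)`. -/
def envK (g : Cfg d → ℝ) (ω : Cfg d) : ℝ := ∑' x, step ω 0 x * g (shiftC x ω)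

/-- A local function of the environment: a bounded continuous function of finitely many
conductances. -/
def IsLocal (φ : Cfg d → (Fin d → ℝ)) : Prop :=
  (∃ C, ∀ ω, rnorm (φ ω) ≤ C) ∧
  ∃ (S : Finset (V d × V d)) (g : ((V d × V d) → ℝ) → Fin d → ℝ),
    Continuous g ∧ ∀ ω, φ ω = g fun e => if e ∈ S then ω.w e.1 e.2 else 0

/-- The gradient `∇φ(ω,x) := φ(τ_xω) − φ(ω)` of a function of the environment. -/
def grad (φ : Cfg d → (Fin d → ℝ)) (ω : Cfg d) (x : V d) : Fin d → ℝ :=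
  φ (shiftC x ω) - φ ω

/-- The squared `L²`-norm `𝔼(∑_x ω_{0,x} |u(ω,x)|²)` of a vector field. -/
def energy (P : Measure (Cfg d)) (u : Cfg d → V d → Fin d → ℝ) : ℝ≥0∞ :=
  ∫⁻ ω, ∑' x, ENNReal.ofReal (ω.w 0 x * rnorm (u ω x) ^ 2) ∂P

/-- The Dirichlet functional `φ ↦ 𝔼(∑_x ω_{0,x} |x + ∇_xφ(ω)|²)`. -/
def dirichlet (P : Measure (Cfg d)) (φ : Cfg d → (Fin d → ℝ)) : ℝ≥0∞ :=
  energy P fun ω x => toR x + grad φ ω x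

/-- The infimum of the Dirichlet functional over local functions. -/
def dirichletInf (P : Measure (Cfg d)) : ℝ≥0∞ :=
  ⨅ φ : {φ : Cfg d → Fin d → ℝ // IsLocal φ}, dirichlet P φ.1

/-- `χ` is the corrector for the environment law `P`: a shift-covariant measurable
function which is the `L²`-limit of the gradients of some minimizing sequence of the
Dirichlet functional. -/
def IsCorrector (P : Measure (Cfg d)) (χ : Cfg d → V d → Fin d → ℝ) : Prop :=
  (∀ x, Measurable fun ω => χ ω x) ∧
  (∀ ω, χ ω 0 = 0) ∧
  (∀ ω x z, χ ω (x + z) - χ ω x = χ (shiftC x ω) z) ∧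
  ∃ φs : ℕ → Cfg d → Fin d → ℝ,
    (∀ n, IsLocal (φs n)) ∧
    Tendsto (fun n => dirichlet P (φs n)) atTop (𝓝 (dirichletInf P)) ∧
    Tendsto (fun n => energy P fun ω x => grad (φs n) ω x - χ ω x) atTop (𝓝 0)

/-- The harmonic coordinate `Ψ(ω,x) := x + χ(ω,x)`. -/
def Psi (χ : Cfg d → V d → Fin d → ℝ) (ω : Cfg d) (x : V d) : Fin d → ℝ :=
  toR x + χ ω x

/-- The second-moment condition `𝔼(∑_x ω_{0,x}|x|²) < ∞`. -/
def SecondMoment (P : Measure (Cfg d)) : Prop :=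
  ∫⁻ ω, ∑' x, ENNReal.ofReal (ω.w 0 x * vnorm x ^ 2) ∂P < ⊤

/-- The inverse-moment condition `𝔼(1/ω_{0,x}) < ∞`. -/
def InvMoment (P : Measure (Cfg d)) (x : V d) : Prop :=
  ∫⁻ ω, (ENNReal.ofReal (ω.w 0 x))⁻¹ ∂P < ⊤

lemma continuous_rnorm : Continuous (rnorm : (Fin d → ℝ) → ℝ) := by
  unfold rnorm; fun_prop

lemma rnorm_nonneg (y : Fin d → ℝ) : 0 ≤ rnorm y := Real.sqrt_nonneg _

lemma rnorm_sq (y : Fin d → ℝ) : rnorm y ^ 2 = y ⬝ᵥ y := by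
  rw [rnorm, Real.sq_sqrt (Finset.sum_nonneg fun i _ => sq_nonneg _)]
  simp only [dotProduct, sq]

lemma dotProduct_sq_le (u v : Fin d → ℝ) : (u ⬝ᵥ v) ^ 2 ≤ rnorm u ^ 2 * rnorm v ^ 2 := by
  simpa only [rnorm_sq, dotProduct, ← sq] using Finset.sum_mul_sq_le_sq_mul_sq Finset.univ u v

lemma abs_dotProduct_le (u v : Fin d → ℝ) : |u ⬝ᵥ v| ≤ rnorm u * rnorm v :=
  abs_le_of_sq_le_sq (by rw [mul_pow]; exact dotProduct_sq_le u v)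
    (mul_nonneg (rnorm_nonneg u) (rnorm_nonneg v))

lemma rnorm_sub_sq_le (a b : Fin d → ℝ) :
    rnorm (a - b) ^ 2 ≤ 2 * rnorm a ^ 2 + 2 * rnorm b ^ 2 := by
  simp only [rnorm_sq, dotProduct, Pi.sub_apply, Finset.mul_sum, ← Finset.sum_add_distrib]
  exact Finset.sum_le_sum fun i _ => by nlinarith [sq_nonneg (a i + b i)]

lemma dotProduct_toR_unit (lam : Fin d → ℝ) (i : Fin d) : lam ⬝ᵥ toR (unit i) = lam i := by
  simp [dotProduct, toR, unit]

lemma unit_injective : Function.Injective (unit : Fin d → V d) := fun i j h => by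
  simpa [unit, eq_comm] using congrFun h j

lemma measurable_dotProduct {α : Type*} [MeasurableSpace α] {f : α → Fin d → ℝ}
    (hf : Measurable f) (lam : Fin d → ℝ) : Measurable fun a => lam ⬝ᵥ f a :=
  (continuous_const.dotProduct continuous_id).measurable.comp hf

section Analysis

variable {α : Type*} [MeasurableSpace α] {μ : Measure α}

lemma lintegral_enorm_sq_le_mul {w h : α → ℝ} (hw : AEMeasurable w μ) (hh : AEMeasurable h μ)
    (hpos : ∀ᵐ a ∂μ, 0 < w a) :
    (∫⁻ a, ‖h a‖ₑ ∂μ) ^ 2 ≤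
      (∫⁻ a, ENNReal.ofReal (w a * h a ^ 2) ∂μ) * ∫⁻ a, (ENNReal.ofReal (w a))⁻¹ ∂μ := by
  set f : α → ℝ≥0∞ := fun a => ENNReal.ofReal (w a * h a ^ 2) ^ (2⁻¹ : ℝ)
  set g : α → ℝ≥0∞ := fun a => (ENNReal.ofReal (w a))⁻¹ ^ (2⁻¹ : ℝ)
  have hfg : (fun a => ‖h a‖ₑ) =ᵐ[μ] f * g := by
    filter_upwards [hpos] with a ha
    have hw0 : ENNReal.ofReal (w a) ≠ 0 := (ENNReal.ofReal_pos.2 ha).ne'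
    rw [Pi.mul_apply, ← ENNReal.mul_rpow_of_nonneg _ _ (by norm_num), ENNReal.ofReal_mul ha.le,
      mul_comm, ← mul_assoc, ENNReal.inv_mul_cancel hw0 ENNReal.ofReal_ne_top, one_mul,
      ← sq_abs, ENNReal.ofReal_pow (abs_nonneg _), ← Real.enorm_eq_ofReal_abs,
      ← ENNReal.rpow_natCast, ← ENNReal.rpow_mul]
    norm_num
  have hsqrt := (ENNReal.continuous_rpow_const (y := 2⁻¹)).measurable
  have holder := ENNReal.lintegral_mul_le_Lp_mul_Lq μ Real.HolderConjugate.two_two (f := f) (g := g)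
    (hsqrt.comp_aemeasurable (hw.mul (hh.pow_const 2)).ennreal_ofReal)
    (hsqrt.comp_aemeasurable hw.ennreal_ofReal.inv)
  have hsq : ∀ x : ℝ≥0∞, (x ^ (2⁻¹ : ℝ)) ^ 2 = x := by
    simpa using ENNReal.rpow_inv_natCast_pow two_ne_zero
  simp only [f, g, ENNReal.rpow_inv_rpow two_ne_zero, one_div] at holder
  rw [lintegral_congr_ae hfg]
  calc (∫⁻ a, (f * g) a ∂μ) ^ 2 ≤ _ := pow_le_pow_left' holder 2
    _ = _ := by rw [mul_pow, hsq, hsq]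

lemma tendsto_nhds_zero_of_sq_le {ι : Type*} {l : Filter ι} {x C : ι → ℝ≥0∞}
    (hC : Tendsto C l (𝓝 0)) (hx : ∀ i, x i ^ 2 ≤ C i) : Tendsto x l (𝓝 0) := by
  have hsqrt : Tendsto (fun i => C i ^ (2⁻¹ : ℝ)) l (𝓝 0) := by
    simpa [Function.comp_def] using ((ENNReal.continuous_rpow_const (y := 2⁻¹)).tendsto 0).comp hC
  refine tendsto_of_tendsto_of_tendsto_of_le_of_le tendsto_const_nhds hsqrt (fun _ => zero_le)
    fun i => (ENNReal.le_rpow_inv_iff two_pos).2 ?_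
  simpa [ENNReal.rpow_two] using hx i

lemma integral_tsum_of_nonneg {ι : Type*} [Countable ι] {g : ι → α → ℝ} (hg : ∀ i a, 0 ≤ g i a)
    (hm : ∀ i, AEMeasurable (g i) μ) (hfin : ∫⁻ a, ∑' i, ENNReal.ofReal (g i a) ∂μ ≠ ⊤) :
    ∫ a, ∑' i, g i a ∂μ = (∫⁻ a, ∑' i, ENNReal.ofReal (g i a) ∂μ).toReal := by
  have htoReal : ∀ a, ∑' i, g i a = (∑' i, ENNReal.ofReal (g i a)).toReal := fun a => by
    rw [ENNReal.tsum_toReal_eq fun _ => ENNReal.ofReal_ne_top]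
    simp only [ENNReal.toReal_ofReal (hg _ a)]
  simp only [htoReal]
  have hm' : AEMeasurable (fun a => ∑' i, ENNReal.ofReal (g i a)) μ :=
    AEMeasurable.tsum fun i => (hm i).ennreal_ofReal
  exact integral_toReal hm' (ae_lt_top' hm' hfin)

lemma integral_pos_of_pos [NeZero μ] {f : α → ℝ} (hf : ∀ a, 0 < f a) (hi : Integrable f μ) :
    0 < ∫ a, f a ∂μ := by
  rw [integral_pos_iff_support_of_nonneg (fun a => (hf a).le) hi,
    Function.support_eq_univ fun a => (hf a).ne']
  exact Measure.measure_univ_pos.2 (NeZero.ne μ)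

lemma sum_lintegral_le_lintegral_tsum {ι κ : Type*} [Fintype ι] {f : ι → κ}
    (hf : Function.Injective f) {F : α → κ → ℝ≥0∞} (hF : ∀ i, Measurable fun a => F a (f i)) :
    ∑ i, ∫⁻ a, F a (f i) ∂μ ≤ ∫⁻ a, ∑' k, F a k ∂μ := by
  rw [← lintegral_finsetSum _ fun i _ => hF i]
  refine lintegral_mono fun a => ?_
  rw [← tsum_fintype (L := SummationFilter.unconditional ι)]
  exact ENNReal.tsum_comp_le_tsum_of_injective hf _

end Analysis

lemma measurable_w (x y : V d) : Measurable fun ω : Cfg d => ω.w x y :=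
  (measurable_pi_apply y).comp ((measurable_pi_apply x).comp (comap_measurable Cfg.w))

lemma measurable_shiftC (z : V d) : Measurable (shiftC z : Cfg d → Cfg d) :=
  measurable_iff_comap_le.mpr <| by
    change MeasurableSpace.comap (shiftC z) (MeasurableSpace.comap Cfg.w _) ≤ _
    rw [MeasurableSpace.comap_comp]
    exact (measurable_pi_lambda _ fun x => measurable_pi_lambda _ fun y =>
      measurable_w (x + z) (y + z)).comap_le

lemma measurable_piC (x : V d) : Measurable fun ω : Cfg d => piC ω x :=
  Measurable.tsum fun y => measurable_w x y

lemma IsLocal.measurable {φ : Cfg d → Fin d → ℝ} (hφ : IsLocal φ) : Measurable φ := by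
  obtain ⟨-, S, g, hg, hφ⟩ := hφ
  rw [funext hφ]
  refine hg.measurable.comp (measurable_pi_lambda _ fun e => ?_)
  split_ifs
  exacts [measurable_w e.1 e.2, measurable_const]

section Local

variable {P : Measure (Cfg d)} {φ : Cfg d → Fin d → ℝ}

lemma IsLocal.integrable_dotProduct [IsFiniteMeasure P] (hφ : IsLocal φ) (lam : Fin d → ℝ) :
    Integrable (fun ω => lam ⬝ᵥ φ ω) P := by
  obtain ⟨C, hC⟩ := hφ.1
  refine Integrable.of_bound (measurable_dotProduct hφ.measurable lam).aestronglyMeasurable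
    (rnorm lam * C) (ae_of_all _ fun ω => ?_)
  exact (abs_dotProduct_le lam (φ ω)).trans
    (mul_le_mul_of_nonneg_left (hC ω) (rnorm_nonneg lam))

lemma IsLocal.measurable_grad (hφ : IsLocal φ) (e : V d) : Measurable fun ω => grad φ ω e :=
  (hφ.measurable.comp (measurable_shiftC e)).sub hφ.measurable

lemma dotProduct_grad (lam : Fin d → ℝ) (ω : Cfg d) (e : V d) :
    lam ⬝ᵥ grad φ ω e = lam ⬝ᵥ φ (shiftC e ω) - lam ⬝ᵥ φ ω :=
  dotProduct_sub _ _ _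

lemma IsLocal.integrable_dotProduct_grad [IsFiniteMeasure P] {e : V d}
    (he : MeasurePreserving (shiftC e) P P) (hφ : IsLocal φ) (lam : Fin d → ℝ) :
    Integrable (fun ω => lam ⬝ᵥ grad φ ω e) P := by
  simp only [dotProduct_grad]
  exact (he.integrable_comp_of_integrable (hφ.integrable_dotProduct lam)).sub
    (hφ.integrable_dotProduct lam)

lemma IsLocal.integral_dotProduct_grad [IsFiniteMeasure P] {e : V d}
    (he : MeasurePreserving (shiftC e) P P) (hφ : IsLocal φ) (lam : Fin d → ℝ) :
    ∫ ω, lam ⬝ᵥ grad φ ω e ∂P = 0 := by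
  have hF := hφ.integrable_dotProduct (P := P) lam
  have hFe : Integrable (fun ω => lam ⬝ᵥ φ (shiftC e ω)) P := he.integrable_comp_of_integrable hF
  have hshift : ∫ ω, lam ⬝ᵥ φ (shiftC e ω) ∂P = ∫ ω, lam ⬝ᵥ φ ω ∂P := by
    conv_rhs => rw [← he.map_eq]
    exact (integral_map he.aemeasurable (he.map_eq.symm ▸ hF.aestronglyMeasurable)).symm
  simp only [dotProduct_grad]
  rw [integral_sub hFe hF, hshift, sub_self]

end Local

section Energy

variable (P : Measure (Cfg d))

lemma ofReal_mul_dotProduct_sq_le (lam y : Fin d → ℝ) {w : ℝ} (hw : 0 ≤ w) :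
    ENNReal.ofReal (w * (lam ⬝ᵥ y) ^ 2) ≤
      ENNReal.ofReal (rnorm lam ^ 2) * ENNReal.ofReal (w * rnorm y ^ 2) := by
  rw [← ENNReal.ofReal_mul (sq_nonneg _)]
  refine ENNReal.ofReal_le_ofReal ?_
  nlinarith [dotProduct_sq_le lam y]

lemma lintegral_tsum_dotProduct_sq_le_energy (lam : Fin d → ℝ) (u : Cfg d → V d → Fin d → ℝ) :
    ∫⁻ ω, ∑' x, ENNReal.ofReal (ω.w 0 x * (lam ⬝ᵥ u ω x) ^ 2) ∂P ≤
      ENNReal.ofReal (rnorm lam ^ 2) * energy P u := by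
  calc _ ≤ ∫⁻ ω, ENNReal.ofReal (rnorm lam ^ 2) *
          ∑' x, ENNReal.ofReal (ω.w 0 x * rnorm (u ω x) ^ 2) ∂P := by
        refine lintegral_mono fun ω => ?_
        rw [← ENNReal.tsum_mul_left]
        exact ENNReal.tsum_le_tsum fun x => ofReal_mul_dotProduct_sq_le lam _ (ω.nonneg 0 x)
    _ = _ := lintegral_const_mul' _ _ ENNReal.ofReal_ne_top

lemma lintegral_dotProduct_sq_le_energy (lam : Fin d → ℝ) (u : Cfg d → V d → Fin d → ℝ)
    (e : V d) :
    ∫⁻ ω, ENNReal.ofReal (ω.w 0 e * (lam ⬝ᵥ u ω e) ^ 2) ∂P ≤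
      ENNReal.ofReal (rnorm lam ^ 2) * energy P u :=
  (lintegral_mono fun ω => ENNReal.le_tsum (f := fun x =>
    ENNReal.ofReal (ω.w 0 x * (lam ⬝ᵥ u ω x) ^ 2)) e).trans
    (lintegral_tsum_dotProduct_sq_le_energy P lam u)

lemma ofReal_mul_rnorm_sub_sq_le (a b : Fin d → ℝ) {w : ℝ} (hw : 0 ≤ w) :
    ENNReal.ofReal (w * rnorm (a - b) ^ 2) ≤
      2 * ENNReal.ofReal (w * rnorm a ^ 2) + 2 * ENNReal.ofReal (w * rnorm b ^ 2) := by
  rw [← ENNReal.ofReal_ofNat 2, ← ENNReal.ofReal_mul zero_le_two, ← ENNReal.ofReal_mul zero_le_two]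
  refine (ENNReal.ofReal_le_ofReal ?_).trans ENNReal.ofReal_add_le
  nlinarith [rnorm_sub_sq_le a b]

lemma measurable_energy_integrand {u : Cfg d → V d → Fin d → ℝ}
    (hu : ∀ x, Measurable fun ω => u ω x) :
    Measurable fun ω : Cfg d => ∑' x, ENNReal.ofReal (ω.w 0 x * rnorm (u ω x) ^ 2) :=
  Measurable.tsum fun x =>
    ((measurable_w 0 x).mul ((continuous_rnorm.measurable.comp (hu x)).pow_const 2)).ennreal_ofReal

lemma energy_sub_le {a b : Cfg d → V d → Fin d → ℝ} (ha : ∀ x, Measurable fun ω => a ω x) :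
    energy P (fun ω x => a ω x - b ω x) ≤ 2 * energy P a + 2 * energy P b := by
  calc _ ≤ ∫⁻ ω, (2 * ∑' x, ENNReal.ofReal (ω.w 0 x * rnorm (a ω x) ^ 2)) +
          2 * ∑' x, ENNReal.ofReal (ω.w 0 x * rnorm (b ω x) ^ 2) ∂P := by
        refine lintegral_mono fun ω => ?_
        rw [← ENNReal.tsum_mul_left, ← ENNReal.tsum_mul_left, ← ENNReal.tsum_add]
        exact ENNReal.tsum_le_tsum fun x => ofReal_mul_rnorm_sub_sq_le _ _ (ω.nonneg 0 x)
    _ = 2 * energy P a + 2 * energy P b := by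
        rw [lintegral_add_left ((measurable_energy_integrand ha).const_mul 2),
          lintegral_const_mul' _ _ ENNReal.ofNat_ne_top,
          lintegral_const_mul' _ _ ENNReal.ofNat_ne_top]
        rfl

end Energy

lemma piC_pos (ω : Cfg d) (x : V d) : 0 < piC ω x := ω.pos x

lemma piC_mul_tsum_step_mul (ω : Cfg d) (x : V d) (g : V d → ℝ) :
    piC ω x * ∑' y, step ω x y * g y = ∑' y, ω.w x y * g y := by
  rw [← tsum_mul_left]
  refine tsum_congr fun y => ?_
  have hπ := (piC_pos ω x).ne'
  rw [step]
  field_simp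

lemma integral_Qmeas (P : Measure (Cfg d)) (f : Cfg d → ℝ) :
    ∫ ω, f ω ∂Qmeas P = (∫ ω, piC ω 0 * f ω ∂P) / ∫ ω, piC ω 0 ∂P := by
  rw [Qmeas, integral_smul_measure, integral_withDensity_eq_integral_toReal_smul
    (measurable_piC 0).ennreal_ofReal (ae_of_all _ fun _ => ENNReal.ofReal_lt_top),
    ENNReal.toReal_inv, ENNReal.toReal_ofReal (integral_nonneg fun ω => (piC_pos ω 0).le)]
  simp only [ENNReal.toReal_ofReal (piC_pos _ 0).le, smul_eq_mul]
  rw [inv_mul_eq_div]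

lemma InvMoment.ae_pos {P : Measure (Cfg d)} {e : V d} (hB : InvMoment P e) :
    ∀ᵐ ω ∂P, 0 < ω.w 0 e := by
  filter_upwards [ae_lt_top (measurable_w 0 e).ennreal_ofReal.inv hB.ne] with ω hω
  simpa [ENNReal.inv_lt_top] using hω

section Corrector

variable {P : Measure (Cfg d)} {χ : Cfg d → V d → Fin d → ℝ}

lemma IsCorrector.measurable_psi (hχ : IsCorrector P χ) (x : V d) :
    Measurable fun ω => Psi χ ω x :=
  measurable_const.add (hχ.1 x)

lemma dirichletInf_lt_top (hmom : SecondMoment P) : dirichletInf P < ⊤ := by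
  have h0 : IsLocal (fun _ : Cfg d => (0 : Fin d → ℝ)) :=
    ⟨⟨0, fun _ => by simp [rnorm]⟩, ∅, fun _ => 0, continuous_const, fun _ => rfl⟩
  refine (iInf_le _ ⟨_, h0⟩).trans_lt ?_
  simpa [SecondMoment, dirichlet, energy, grad, vnorm] using hmom

lemma IsCorrector.energy_psi_lt_top (hχ : IsCorrector P χ) (hmom : SecondMoment P) :
    energy P (Psi χ) < ⊤ := by
  obtain ⟨-, -, -, φs, hloc, hdir, hen⟩ := hχ
  have hinf := dirichletInf_lt_top hmom
  obtain ⟨n, hn_dir, hn_en⟩ :=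
    ((hdir.eventually_lt_const (ENNReal.lt_add_right hinf.ne one_ne_zero)).and
      (hen.eventually_lt_const zero_lt_one)).exists
  have hpsi : Psi χ = fun ω x => (toR x + grad (φs n) ω x) - (grad (φs n) ω x - χ ω x) := by
    funext ω x
    simp only [Psi]
    abel
  rw [hpsi]
  refine (energy_sub_le P fun x => measurable_const.add ((hloc n).measurable_grad x)).trans_lt ?_
  exact ENNReal.add_lt_top.2
    ⟨ENNReal.mul_lt_top ENNReal.ofNat_lt_top
      (hn_dir.trans (ENNReal.add_lt_top.2 ⟨hinf, ENNReal.one_lt_top⟩)),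
    ENNReal.mul_lt_top ENNReal.ofNat_lt_top (hn_en.trans ENNReal.one_lt_top)⟩

lemma IsCorrector.integral_dotProduct_psi [IsProbabilityMeasure P] (hχ : IsCorrector P χ)
    {e : V d} (he : MeasurePreserving (shiftC e) P P) (hB : InvMoment P e) (lam : Fin d → ℝ) :
    ∫ ω, lam ⬝ᵥ Psi χ ω e ∂P = lam ⬝ᵥ toR e := by
  have hψ := measurable_dotProduct (hχ.measurable_psi e) lam
  obtain ⟨hχm, -, -, φs, hloc, -, hen⟩ := hχ
  set u : ℕ → Cfg d → ℝ := fun n ω => lam ⬝ᵥ toR e + lam ⬝ᵥ grad (φs n) ω e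
  have hu : ∀ n, Integrable (u n) P := fun n =>
    (integrable_const _).add ((hloc n).integrable_dotProduct_grad he lam)
  have hu_mean : ∀ n, ∫ ω, u n ω ∂P = lam ⬝ᵥ toR e := fun n => by
    rw [integral_add (integrable_const _) ((hloc n).integrable_dotProduct_grad he lam),
      (hloc n).integral_dotProduct_grad he lam]
    simp
  have hdiff : ∀ n ω, u n ω - lam ⬝ᵥ Psi χ ω e = lam ⬝ᵥ (grad (φs n) ω e - χ ω e) := by
    intro n ω
    simp only [u, Psi, dotProduct_add, dotProduct_sub]
    ring
  -- the weighted Cauchy–Schwarz inequality turns energy convergence into `L¹` convergence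
  have hL1 : Tendsto (fun n => ∫⁻ ω, ‖u n ω - lam ⬝ᵥ Psi χ ω e‖ₑ ∂P) atTop (𝓝 0) := by
    refine tendsto_nhds_zero_of_sq_le (C := fun n => ENNReal.ofReal (rnorm lam ^ 2) *
      energy P (fun ω x => grad (φs n) ω x - χ ω x) * ∫⁻ ω, (ENNReal.ofReal (ω.w 0 e))⁻¹ ∂P)
      ?_ fun n => ?_
    · simpa using ENNReal.Tendsto.mul_const
        (ENNReal.Tendsto.const_mul hen (Or.inr ENNReal.ofReal_ne_top)) (Or.inr hB.ne)
    · simp only [hdiff]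
      refine (lintegral_enorm_sq_le_mul (measurable_w 0 e).aemeasurable
        (measurable_dotProduct (((hloc n).measurable_grad e).sub (hχm e)) lam).aemeasurable
        hB.ae_pos).trans (mul_le_mul_left ?_ _)
      exact lintegral_dotProduct_sq_le_energy P lam (fun ω x => grad (φs n) ω x - χ ω x) e
  have hlim := tendsto_integral_of_L1 _ hψ.aestronglyMeasurable (Eventually.of_forall hu) hL1
  simp only [hu_mean] at hlim
  exact (tendsto_nhds_unique tendsto_const_nhds hlim).symm

lemma IsCorrector.ofReal_dotProduct_sq_le [IsProbabilityMeasure P] (hχ : IsCorrector P χ)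
    {e : V d} (he : MeasurePreserving (shiftC e) P P) (hB : InvMoment P e) (lam : Fin d → ℝ) :
    ENNReal.ofReal ((lam ⬝ᵥ toR e) ^ 2) ≤
      (∫⁻ ω, ENNReal.ofReal (ω.w 0 e * (lam ⬝ᵥ Psi χ ω e) ^ 2) ∂P) *
        ∫⁻ ω, (ENNReal.ofReal (ω.w 0 e))⁻¹ ∂P :=
  calc ENNReal.ofReal ((lam ⬝ᵥ toR e) ^ 2) = ‖∫ ω, lam ⬝ᵥ Psi χ ω e ∂P‖ₑ ^ 2 := by
        rw [hχ.integral_dotProduct_psi he hB, Real.enorm_eq_ofReal_abs,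
          ← ENNReal.ofReal_pow (abs_nonneg _), sq_abs]
    _ ≤ (∫⁻ ω, ‖lam ⬝ᵥ Psi χ ω e‖ₑ ∂P) ^ 2 :=
        pow_le_pow_left' (enorm_integral_le_lintegral_enorm _) 2
    _ ≤ _ := lintegral_enorm_sq_le_mul (measurable_w 0 e).aemeasurable
        (measurable_dotProduct (hχ.measurable_psi e) lam).aemeasurable hB.ae_pos

lemma IsCorrector.ofReal_rnorm_sq_le [IsProbabilityMeasure P] (hχ : IsCorrector P χ)
    (hinv : ∀ z, MeasurePreserving (shiftC z) P P) (hinvmom : ∀ i, InvMoment P (unit i))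
    (lam : Fin d → ℝ) :
    ENNReal.ofReal (rnorm lam ^ 2) ≤
      (∑ i, ∫⁻ ω, (ENNReal.ofReal (ω.w 0 (unit i)))⁻¹ ∂P) *
        ∫⁻ ω, ∑' x, ENNReal.ofReal (ω.w 0 x * (lam ⬝ᵥ Psi χ ω x) ^ 2) ∂P := by
  set B := ∑ i, ∫⁻ ω, (ENNReal.ofReal (ω.w 0 (unit i)))⁻¹ ∂P
  set A : V d → ℝ≥0∞ := fun x => ∫⁻ ω, ENNReal.ofReal (ω.w 0 x * (lam ⬝ᵥ Psi χ ω x) ^ 2) ∂P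
  have hlam : rnorm lam ^ 2 = ∑ i, (lam ⬝ᵥ toR (unit i)) ^ 2 := by
    rw [rnorm_sq]
    simp only [dotProduct_toR_unit, sq]
    rfl
  calc ENNReal.ofReal (rnorm lam ^ 2) = ∑ i, ENNReal.ofReal ((lam ⬝ᵥ toR (unit i)) ^ 2) := by
        rw [hlam, ENNReal.ofReal_sum_of_nonneg fun i _ => sq_nonneg _]
    _ ≤ ∑ i, A (unit i) * B := Finset.sum_le_sum fun i _ =>
        (hχ.ofReal_dotProduct_sq_le (hinv _) (hinvmom i) lam).trans
          (mul_le_mul_right (Finset.single_le_sum (f := fun j =>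
            ∫⁻ ω, (ENNReal.ofReal (ω.w 0 (unit j)))⁻¹ ∂P) (fun j _ => zero_le)
            (Finset.mem_univ i)) _)
    _ = B * ∑ i, A (unit i) := by rw [Finset.mul_sum]; simp only [mul_comm]
    _ ≤ _ := mul_le_mul_right (sum_lintegral_le_lintegral_tsum unit_injective fun i =>
        ((measurable_w 0 (unit i)).mul ((measurable_dotProduct (hχ.measurable_psi _) lam).pow_const
          2)).ennreal_ofReal) B

end Corrector

/-- (Non-degeneracy of the limiting Brownian motion)
Suppose `ℙ` satisfies the "usual conditions", `𝔼(∑_x ω_{0,x}|x|²) < ∞` and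
`𝔼(1/ω_{0,ê_i}) < ∞` for `i = 1,…,d`.  Then there is `c > 0` such that
`E_ℚ E_ω^0[(λ·Ψ(ω,X_1))²] ≥ c|λ|²` for every `λ ∈ ℝ^d`, where `Ψ = x + χ` is the
harmonic coordinate. -/
theorem statement8 {d : ℕ} (P : Measure (Cfg d)) (hP : UsualConds P)
    (hmom : SecondMoment P)
    (hinvmom : ∀ i : Fin d, InvMoment P (unit i))
    (χ : Cfg d → V d → Fin d → ℝ) (hχ : IsCorrector P χ) :
    ∃ c : ℝ, 0 < c ∧ ∀ lam : Fin d → ℝ,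
      c * rnorm lam ^ 2 ≤
        ∫ ω, (∑' x, step ω 0 x * (∑ i, lam i * Psi χ ω x i) ^ 2) ∂(Qmeas P) := by
  have := hP.prob
  set Z := ∫ ω, piC ω 0 ∂P
  set B : ℝ≥0∞ := ∑ i, ∫⁻ ω, (ENNReal.ofReal (ω.w 0 (unit i)))⁻¹ ∂P
  have hZ : 0 < Z := integral_pos_of_pos (fun ω => piC_pos ω 0) hP.integ
  have hB : B ≠ ⊤ := ENNReal.sum_ne_top.2 fun i _ => (hinvmom i).ne
  refine ⟨(Z * (B.toReal + 1))⁻¹, by positivity, fun lam => ?_⟩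
  set T := ∫⁻ ω, ∑' x, ENNReal.ofReal (ω.w 0 x * (lam ⬝ᵥ Psi χ ω x) ^ 2) ∂P
  have hT : T ≠ ⊤ := ((lintegral_tsum_dotProduct_sq_le_energy P lam (Psi χ)).trans_lt
    (ENNReal.mul_lt_top ENNReal.ofReal_lt_top (hχ.energy_psi_lt_top hmom))).ne
  have hQ : ∫ ω, ∑' x, step ω 0 x * (lam ⬝ᵥ Psi χ ω x) ^ 2 ∂Qmeas P = T.toReal / Z := by
    rw [integral_Qmeas]
    simp only [piC_mul_tsum_step_mul]
    rw [integral_tsum_of_nonneg (fun x ω => mul_nonneg (ω.nonneg 0 x) (sq_nonneg _))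
      (fun x => ((measurable_w 0 x).mul ((measurable_dotProduct (hχ.measurable_psi x)
        lam).pow_const 2)).aemeasurable) hT]
  have hlam : rnorm lam ^ 2 ≤ B.toReal * T.toReal := by
    simpa [ENNReal.toReal_ofReal (sq_nonneg _), ENNReal.toReal_mul] using
      ENNReal.toReal_mono (ENNReal.mul_ne_top hB hT) (hχ.ofReal_rnorm_sq_le hP.inv hinvmom lam)
  change _ ≤ ∫ ω, ∑' x, step ω 0 x * (lam ⬝ᵥ Psi χ ω x) ^ 2 ∂Qmeas P
  rw [hQ, inv_mul_eq_div, div_le_div_iff₀ (by positivity) hZ]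
  nlinarith [mul_le_mul_of_nonneg_right hlam hZ.le, ENNReal.toReal_nonneg (a := T)]

end RCM
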